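/- (Two-valued inversion density identity) For every σ > 0 and every z ∈ ℝ, writing x₊ = φ_σ⁻¹(z) and x₋ = φ_σ⁻¹(−z), one has f_IG(x₊|σ,σ)/φ_σ'(x₊) + f_IG(x₋|σ,σ)/φ_σ'(x₋) = 2·φ(z), where φ_σ'(x) = σ(1+x)/(2x^{3/2}) and φ(z) = exp(−z²/2)/√(2π). In particular the selection probabilities p₊ = 1/(1+x₊) and p₋ = 1/(1+x₋) satisfy p₊ + p₋ = 1. -/

import Mathlib

open MeasureTheory Real Set

/-- Inverse Gaussian density `f_IG(x | γ, δ)`. -/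
noncomputable def fIG (γ δ x : ℝ) : ℝ :=
  δ / Real.sqrt (2 * Real.pi * x ^ 3) * Real.exp (-(γ * x - δ) ^ 2 / (2 * x))

/-- The map `φ_σ(x) = σ (√x − 1/√x)`. -/
noncomputable def phiMap (σ x : ℝ) : ℝ := σ * (Real.sqrt x - 1 / Real.sqrt x)

/-- The inverse map `φ_σ⁻¹(z) = 1 + z²/(2σ²) + (z/σ)√(1 + z²/(4σ²))`. -/
noncomputable def phiInv (σ z : ℝ) : ℝ :=
  1 + z ^ 2 / (2 * σ ^ 2) + z / σ * Real.sqrt (1 + z ^ 2 / (4 * σ ^ 2))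

/-- Standard normal density `φ(z) = exp(−z²/2)/√(2π)`. -/
noncomputable def stdNormalPdf (z : ℝ) : ℝ := Real.exp (-z ^ 2 / 2) / Real.sqrt (2 * Real.pi)

/-- Standard normal cumulative distribution function. -/
noncomputable def stdNormalCDF (z : ℝ) : ℝ := ∫ t in Set.Iic z, stdNormalPdf t

/-- Modified Bessel function of the second kind `K_p(z)` (integral representation). -/
noncomputable def besselK (p z : ℝ) : ℝ :=
  (1 / 2) * ∫ t in Set.Ioi (0 : ℝ), t ^ (p - 1) * Real.exp (-z * (t + 1 / t) / 2)

/-- Generalized inverse Gaussian density `f_GIG(x | γ, δ, p)`. -/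
noncomputable def fGIG (γ δ p x : ℝ) : ℝ :=
  (γ / δ) ^ p * x ^ (p - 1) / (2 * besselK p (γ * δ)) *
    Real.exp (-(γ ^ 2 * x + δ ^ 2 / x) / 2)

/-- Generalized hyperbolic density `f_GH(y | μ, β, γ, δ, p)` with `α = √(β² + γ²)`. -/
noncomputable def fGH (μ β γ δ p y : ℝ) : ℝ :=
  Real.sqrt (Real.sqrt (β ^ 2 + γ ^ 2)) *
      (γ / (Real.sqrt (β ^ 2 + γ ^ 2) * δ)) ^ p /
      (Real.sqrt (2 * Real.pi) * besselK p (δ * γ)) *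
    Real.exp (β * (y - μ)) *
    besselK (p - 1 / 2) (Real.sqrt (β ^ 2 + γ ^ 2) * Real.sqrt (δ ^ 2 + (y - μ) ^ 2)) /
    (δ ^ 2 + (y - μ) ^ 2) ^ ((1 - 2 * p) / 4)

/-!
With `u = z/(2σ)` and `r = √(1 + u²)` the two branches are `x₊ = (r + u)²` and `x₋ = (r - u)²`,
so `x₊ x₋ = 1`, which is `p₊ + p₋ = 1`. Since `φ_σ(x)² = σ²(x - 1)²/x`, the change of variables
`φ_σ` carries the `IG(σ, σ)` density to the normal one: `f_IG(x|σ,σ)/φ_σ'(x) = 2 φ(φ_σ(x))/(1 + x)`.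
As `φ_σ(x±) = ±z` and `φ` is even, the two terms add up to `2 φ(z) (p₊ + p₋) = 2 φ(z)`.
-/

theorem sqrt_one_add_sq_add_pos (u : ℝ) : 0 < √(1 + u ^ 2) + u := by
  have hu : |u| < √(1 + u ^ 2) := by
    rw [← sqrt_sq_eq_abs]; exact sqrt_lt_sqrt (sq_nonneg u) (by linarith)
  linarith [neg_abs_le u]

-- With `u = z / (2σ)`, `√(1 + u²) + u` is the positive root of `t² - 2ut - 1 = 0`,
-- i.e. the solution of `t - 1/t = 2u = z/σ`.
theorem phiInv_eq_sq (σ z : ℝ) :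
    phiInv σ z = (√(1 + (z / (2 * σ)) ^ 2) + z / (2 * σ)) ^ 2 := by
  have hr : √(1 + (z / (2 * σ)) ^ 2) ^ 2 = 1 + (z / (2 * σ)) ^ 2 := sq_sqrt (by positivity)
  rw [phiInv, show z ^ 2 / (4 * σ ^ 2) = (z / (2 * σ)) ^ 2 by ring]
  linear_combination (-1 : ℝ) * hr

theorem phiInv_neg_eq_sq (σ z : ℝ) :
    phiInv σ (-z) = (√(1 + (z / (2 * σ)) ^ 2) - z / (2 * σ)) ^ 2 := by
  rw [phiInv_eq_sq, neg_div, neg_sq, ← sub_eq_add_neg]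

theorem phiInv_pos (σ z : ℝ) : 0 < phiInv σ z := by
  rw [phiInv_eq_sq]; exact pow_pos (sqrt_one_add_sq_add_pos _) 2

theorem phiInv_mul_phiInv_neg (σ z : ℝ) : phiInv σ z * phiInv σ (-z) = 1 := by
  have hr : √(1 + (z / (2 * σ)) ^ 2) ^ 2 = 1 + (z / (2 * σ)) ^ 2 := sq_sqrt (by positivity)
  rw [phiInv_eq_sq, phiInv_neg_eq_sq, ← mul_pow]
  linear_combination (√(1 + (z / (2 * σ)) ^ 2) ^ 2 - (z / (2 * σ)) ^ 2 + 1) * hr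

theorem stdNormalPdf_neg (z : ℝ) : stdNormalPdf (-z) = stdNormalPdf z := by
  rw [stdNormalPdf, stdNormalPdf, neg_sq]

theorem phiMap_phiInv {σ : ℝ} (hσ : σ ≠ 0) (z : ℝ) : phiMap σ (phiInv σ z) = z := by
  set u := z / (2 * σ)
  set r := √(1 + u ^ 2)
  have hr : r ^ 2 = 1 + u ^ 2 := sq_sqrt (by positivity)
  have hpos : 0 < r + u := sqrt_one_add_sq_add_pos u
  rw [phiMap, phiInv_eq_sq, sqrt_sq hpos.le]
  have hinv : 1 / (r + u) = r - u := by
    rw [div_eq_iff hpos.ne']; linear_combination (-1 : ℝ) * hr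
  rw [hinv]
  simp only [u]; field_simp; ring

theorem fIG_div_phiMap_deriv {σ x : ℝ} (hσ : σ ≠ 0) (hx : 0 < x) :
    fIG σ σ x / (σ * (1 + x) / (2 * x ^ ((3 : ℝ) / 2))) =
      2 * stdNormalPdf (phiMap σ x) / (1 + x) := by
  obtain ⟨s, hs, rfl⟩ : ∃ s, 0 < s ∧ s ^ 2 = x := ⟨√x, sqrt_pos.2 hx, sq_sqrt hx.le⟩
  have h32 : (s ^ 2) ^ ((3 : ℝ) / 2) = s ^ 3 := by
    rw [← rpow_natCast s 2, ← rpow_mul hs.le]; norm_num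
  have hroot : √(2 * π * (s ^ 2) ^ 3) = √(2 * π) * s ^ 3 := by
    rw [show (s ^ 2) ^ 3 = (s ^ 3) ^ 2 by ring, sqrt_mul (by positivity), sqrt_sq (by positivity)]
  have hexp : -(σ * s ^ 2 - σ) ^ 2 / (2 * s ^ 2) = -(σ * (s - 1 / s)) ^ 2 / 2 := by
    field_simp
  have hπ : 0 < √(2 * π) := sqrt_pos.2 (by positivity)
  rw [fIG, phiMap, stdNormalPdf, sqrt_sq hs.le, h32, hroot, hexp]
  field_simp

theorem one_div_one_add_add_one_div_one_add {x y : ℝ} (hx : 0 ≤ x) (hy : 0 ≤ y)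
    (hxy : x * y = 1) :
    1 / (1 + x) + 1 / (1 + y) = 1 := by
  field_simp
  linear_combination -hxy

/-- two-valued inversion density identity:
`f_IG(x₊|σ,σ)/φ_σ'(x₊) + f_IG(x₋|σ,σ)/φ_σ'(x₋) = 2 φ(z)` with
`φ_σ'(x) = σ(1+x)/(2 x^{3/2})`, and `1/(1+x₊) + 1/(1+x₋) = 1`. -/
theorem ig_two_valued_inversion (σ : ℝ) (hσ : 0 < σ) (z : ℝ) :
    fIG σ σ (phiInv σ z) / (σ * (1 + phiInv σ z) / (2 * phiInv σ z ^ ((3 : ℝ) / 2))) +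
      fIG σ σ (phiInv σ (-z)) /
        (σ * (1 + phiInv σ (-z)) / (2 * phiInv σ (-z) ^ ((3 : ℝ) / 2))) =
      2 * stdNormalPdf z ∧
    1 / (1 + phiInv σ z) + 1 / (1 + phiInv σ (-z)) = 1 := by
  have hsum : 1 / (1 + phiInv σ z) + 1 / (1 + phiInv σ (-z)) = 1 :=
    one_div_one_add_add_one_div_one_add (phiInv_pos σ z).le (phiInv_pos σ (-z)).le
      (phiInv_mul_phiInv_neg σ z)
  refine ⟨?_, hsum⟩
  rw [fIG_div_phiMap_deriv hσ.ne' (phiInv_pos σ z),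
    fIG_div_phiMap_deriv hσ.ne' (phiInv_pos σ (-z)), phiMap_phiInv hσ.ne', phiMap_phiInv hσ.ne', stdNormalPdf_neg]
  calc 2 * stdNormalPdf z / (1 + phiInv σ z) + 2 * stdNormalPdf z / (1 + phiInv σ (-z))
      = 2 * stdNormalPdf z * (1 / (1 + phiInv σ z) + 1 / (1 + phiInv σ (-z))) := by ring
    _ = 2 * stdNormalPdf z := by rw [hsum, mul_one]
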